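/- arXiv:2212.07753 — 2 statements merged into one kernel-verified Lean document; each statement's English description precedes it below -/
import Mathlib

section
/- Let M be a dg 2-representation of a dg 2-category C, N a pretriangulated 2-subrepresentation of M with each N(i) a full subcategory of M(i), and I a dg ideal in N. Let I' be the dg ideal in M generated by I. Then I' ∩ N = I. -/
set_option linter.unusedVariables false
/-- A (simplified, ungraded) model of a differential graded category: a
preadditive category equipped with a square-zero additive differential `d` on
each Hom-space satisfying the Leibniz rule (the ℤ-grading and Koszul signs are
suppressed in this model). -/
structure DGCat where
  Obj : Type
  Hom : Obj → Obj → Type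
  homGroup : ∀ X Y, AddCommGroup (Hom X Y)
  id : ∀ X, Hom X X
  comp : ∀ {X Y Z}, Hom X Y → Hom Y Z → Hom X Z
  id_comp : ∀ {X Y} (f : Hom X Y), comp (id X) f = f
  comp_id : ∀ {X Y} (f : Hom X Y), comp f (id Y) = f
  assoc : ∀ {W X Y Z} (f : Hom W X) (g : Hom X Y) (h : Hom Y Z),
    comp (comp f g) h = comp f (comp g h)
  comp_add : ∀ {X Y Z} (f : Hom X Y) (g g' : Hom Y Z),
    comp f (g + g') = comp f g + comp f g'
  add_comp : ∀ {X Y Z} (f f' : Hom X Y) (g : Hom Y Z),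
    comp (f + f') g = comp f g + comp f' g
  d : ∀ {X Y}, Hom X Y → Hom X Y
  d_add : ∀ {X Y} (f g : Hom X Y), d (f + g) = d f + d g
  d_sq : ∀ {X Y} (f : Hom X Y), d (d f) = 0
  leibniz : ∀ {X Y Z} (f : Hom X Y) (g : Hom Y Z),
    d (comp f g) = comp (d f) g + comp f (d g)

attribute [instance] DGCat.homGroup

/-- A dg ideal of a dg category: a system of subgroups of the Hom-spaces closed
under pre- and post-composition with arbitrary morphisms and under the
differential. -/
structure DGIdeal (C : DGCat) where
  carrier : ∀ X Y : C.Obj, AddSubgroup (C.Hom X Y)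
  comp_mem_left : ∀ {X Y Z : C.Obj} (f : C.Hom X Y) {g : C.Hom Y Z},
    g ∈ carrier Y Z → C.comp f g ∈ carrier X Z
  comp_mem_right : ∀ {X Y Z : C.Obj} {f : C.Hom X Y} (g : C.Hom Y Z),
    f ∈ carrier X Y → C.comp f g ∈ carrier X Z
  d_mem : ∀ {X Y : C.Obj} {f : C.Hom X Y}, f ∈ carrier X Y → C.d f ∈ carrier X Y

/-- A dg functor between dg categories. -/
structure DGFun (C D : DGCat) where
  obj : C.Obj → D.Obj
  map : ∀ {X Y : C.Obj}, C.Hom X Y → D.Hom (obj X) (obj Y)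
  map_add : ∀ {X Y : C.Obj} (f g : C.Hom X Y), map (f + g) = map f + map g
  map_id : ∀ X : C.Obj, map (C.id X) = D.id (obj X)
  map_comp : ∀ {X Y Z : C.Obj} (f : C.Hom X Y) (g : C.Hom Y Z),
    map (C.comp f g) = D.comp (map f) (map g)
  map_d : ∀ {X Y : C.Obj} (f : C.Hom X Y), map (C.d f) = D.d (map f)

/-- A (pretriangulated) 2-representation of a dg 2-category, recorded through
its underlying data: a dg category `cat i` for each object `i`, and a dg
functor for each 1-morphism.  (`Mor i j` is the set of 1-morphisms `i → j` of
the acting dg 2-category.) -/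
structure TwoRep (ι : Type) (Mor : ι → ι → Type) where
  cat : ι → DGCat
  act : ∀ {i j : ι}, Mor i j → DGFun (cat i) (cat j)

/-- A dg ideal of a dg 2-representation: a dg ideal of each `cat i`, stable
under the action of all 1-morphisms. -/
structure RepIdeal {ι : Type} {Mor : ι → ι → Type} (M : TwoRep ι Mor) where
  ideal : ∀ i, DGIdeal (M.cat i)
  act_mem : ∀ {i j : ι} (F : Mor i j) {X Y : (M.cat i).Obj} {f : (M.cat i).Hom X Y},
    f ∈ (ideal i).carrier X Y →
      (M.act F).map f ∈ (ideal j).carrier ((M.act F).obj X) ((M.act F).obj Y)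

/-- The full dg subcategory of `C` on a set of objects `S`. -/
def DGCat.Full (C : DGCat) (S : Set C.Obj) : DGCat where
  Obj := ↥S
  Hom X Y := C.Hom X.1 Y.1
  homGroup X Y := C.homGroup X.1 Y.1
  id X := C.id X.1
  comp := fun {X Y Z} f g => C.comp f g
  id_comp := fun {X Y} f => C.id_comp f
  comp_id := fun {X Y} f => C.comp_id f
  assoc := fun {W X Y Z} f g h => C.assoc f g h
  comp_add := fun {X Y Z} f g g' => C.comp_add f g g'
  add_comp := fun {X Y Z} f f' g => C.add_comp f f' g
  d := fun {X Y} f => C.d f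
  d_add := fun {X Y} f g => C.d_add f g
  d_sq := fun {X Y} f => C.d_sq f
  leibniz := fun {X Y Z} f g => C.leibniz f g

/-- A family of object-sets, one in each `cat i`, closed under the action of
all 1-morphisms (the objects of a full dg 2-subrepresentation). -/
def ClosedUnderAct {ι : Type} {Mor : ι → ι → Type} (M : TwoRep ι Mor)
    (S : ∀ i, Set (M.cat i).Obj) : Prop :=
  ∀ {i j : ι} (F : Mor i j) (X : (M.cat i).Obj), X ∈ S i → (M.act F).obj X ∈ S j

/-- The full dg 2-subrepresentation of `M` on the objects `S`. -/
def TwoRep.Sub {ι : Type} {Mor : ι → ι → Type} (M : TwoRep ι Mor)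
    (S : ∀ i, Set (M.cat i).Obj) (hS : ClosedUnderAct M S) : TwoRep ι Mor where
  cat i := (M.cat i).Full (S i)
  act := fun {i j} F =>
    { obj := fun X => ⟨(M.act F).obj X.1, hS F X.1 X.2⟩
      map := fun {X Y} f => (M.act F).map f
      map_add := fun {X Y} f g => (M.act F).map_add f g
      map_id := fun X => (M.act F).map_id X.1
      map_comp := fun {X Y Z} f g => (M.act F).map_comp f g
      map_d := fun {X Y} f => (M.act F).map_d f }

/-- The restriction of a dg ideal of `M` to the full 2-subrepresentation on
`S` (denoted `I ∩ N` in the paper). -/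
def RepIdeal.restrict {ι : Type} {Mor : ι → ι → Type} {M : TwoRep ι Mor}
    (S : ∀ i, Set (M.cat i).Obj) (hS : ClosedUnderAct M S) (I : RepIdeal M) :
    RepIdeal (M.Sub S hS) where
  ideal i :=
    { carrier := fun X Y => (I.ideal i).carrier X.1 Y.1
      comp_mem_left := fun {X Y Z} f {g} hg => (I.ideal i).comp_mem_left f hg
      comp_mem_right := fun {X Y Z} {f} g hf => (I.ideal i).comp_mem_right g hf
      d_mem := fun {X Y} {f} hf => (I.ideal i).d_mem hf }
  act_mem := fun {i j} F {X Y} {f} hf => I.act_mem F hf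

/-- Containment of dg ideals of a 2-representation. -/
def RepIdeal.le {ι : Type} {Mor : ι → ι → Type} {M : TwoRep ι Mor}
    (I J : RepIdeal M) : Prop :=
  ∀ (i : ι) (X Y : (M.cat i).Obj), (I.ideal i).carrier X Y ≤ (J.ideal i).carrier X Y

/-- A dg ideal of a 2-representation is proper if it does not contain all
morphisms. -/
def RepIdeal.Proper {ι : Type} {Mor : ι → ι → Type} {M : TwoRep ι Mor}
    (I : RepIdeal M) : Prop :=
  ¬ ∀ (i : ι) (X Y : (M.cat i).Obj), (I.ideal i).carrier X Y = ⊤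

/-- A maximal (proper) dg ideal of a 2-representation: an element of
`MaxSpec`. -/
def RepIdeal.IsMaximal {ι : Type} {Mor : ι → ι → Type} {M : TwoRep ι Mor}
    (I : RepIdeal M) : Prop :=
  I.Proper ∧ ∀ J : RepIdeal M, J.Proper → I.le J → J.le I

section Aux

variable {ι : Type} {Mor : ι → ι → Type} (M : TwoRep ι Mor)
  (S : ∀ i, Set (M.cat i).Obj) (hS : ClosedUnderAct M S)
  (I : RepIdeal (M.Sub S hS))

/-- Generators of the ideal of `M` generated by `I`. -/
def genSet (i : ι) (X Y : (M.cat i).Obj) : Set ((M.cat i).Hom X Y) :=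
  { f | ∃ (U V : ↥(S i)) (g : (M.cat i).Hom U.1 V.1)
      (a : (M.cat i).Hom X U.1) (b : (M.cat i).Hom V.1 Y),
      g ∈ (I.ideal i).carrier U V ∧ f = (M.cat i).comp a ((M.cat i).comp g b) }

/-- The ideal of `M` generated by `I`, built explicitly. -/
def genIdeal : RepIdeal M where
  ideal i :=
    { carrier := fun X Y => AddSubgroup.closure (genSet M S hS I i X Y)
      comp_mem_left := by
        intro X Y Z f g hg
        let L : (M.cat i).Hom Y Z →+ (M.cat i).Hom X Z :=
          AddMonoidHom.mk' (fun h => (M.cat i).comp f h) (fun a b => (M.cat i).comp_add f a b)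
        have h : AddSubgroup.closure (genSet M S hS I i Y Z) ≤
            AddSubgroup.comap L (AddSubgroup.closure (genSet M S hS I i X Z)) := by
          rw [AddSubgroup.closure_le]
          rintro x ⟨U, V, g0, a, b, hgI, rfl⟩
          exact AddSubgroup.subset_closure
            ⟨U, V, g0, (M.cat i).comp f a, b, hgI, ((M.cat i).assoc f a _).symm⟩
        exact h hg
      comp_mem_right := by
        intro X Y Z f g hf
        let L : (M.cat i).Hom X Y →+ (M.cat i).Hom X Z :=
          AddMonoidHom.mk' (fun h => (M.cat i).comp h g) (fun a b => (M.cat i).add_comp a b g)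
        have h : AddSubgroup.closure (genSet M S hS I i X Y) ≤
            AddSubgroup.comap L (AddSubgroup.closure (genSet M S hS I i X Z)) := by
          rw [AddSubgroup.closure_le]
          rintro x ⟨U, V, g0, a, b, hgI, rfl⟩
          refine AddSubgroup.subset_closure
            ⟨U, V, g0, a, (M.cat i).comp b g, hgI, ?_⟩
          show (M.cat i).comp ((M.cat i).comp a ((M.cat i).comp g0 b)) g = _
          rw [(M.cat i).assoc, (M.cat i).assoc]
        exact h hf
      d_mem := by
        intro X Y f hf
        let L : (M.cat i).Hom X Y →+ (M.cat i).Hom X Y :=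
          AddMonoidHom.mk' (fun h => (M.cat i).d h) (fun a b => (M.cat i).d_add a b)
        have h : AddSubgroup.closure (genSet M S hS I i X Y) ≤
            AddSubgroup.comap L (AddSubgroup.closure (genSet M S hS I i X Y)) := by
          rw [AddSubgroup.closure_le]
          rintro x ⟨U, V, g0, a, b, hgI, rfl⟩
          have : L ((M.cat i).comp a ((M.cat i).comp g0 b)) =
              (M.cat i).comp ((M.cat i).d a) ((M.cat i).comp g0 b) +
              ((M.cat i).comp a ((M.cat i).comp ((M.cat i).d g0) b) +
               (M.cat i).comp a ((M.cat i).comp g0 ((M.cat i).d b))) := by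
            show (M.cat i).d _ = _
            rw [(M.cat i).leibniz, (M.cat i).leibniz, (M.cat i).comp_add]
          refine AddSubgroup.mem_comap.2 ?_
          rw [this]
          refine add_mem (AddSubgroup.subset_closure ⟨U, V, g0, (M.cat i).d a, b, hgI, rfl⟩)
            (add_mem (AddSubgroup.subset_closure
              ⟨U, V, (M.cat i).d g0, a, b, (I.ideal i).d_mem hgI, rfl⟩)
              (AddSubgroup.subset_closure ⟨U, V, g0, a, (M.cat i).d b, hgI, rfl⟩))
        exact h hf }
  act_mem := by
    intro i j F X Y f hf
    let L : (M.cat i).Hom X Y →+ (M.cat j).Hom ((M.act F).obj X) ((M.act F).obj Y) :=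
      AddMonoidHom.mk' (fun h => (M.act F).map h) (fun a b => (M.act F).map_add a b)
    have h : AddSubgroup.closure (genSet M S hS I i X Y) ≤
        AddSubgroup.comap L
          (AddSubgroup.closure (genSet M S hS I j ((M.act F).obj X) ((M.act F).obj Y))) := by
      rw [AddSubgroup.closure_le]
      rintro x ⟨U, V, g0, a, b, hgI, rfl⟩
      refine AddSubgroup.subset_closure
        ⟨⟨(M.act F).obj U.1, hS F U.1 U.2⟩, ⟨(M.act F).obj V.1, hS F V.1 V.2⟩,
          (M.act F).map g0, (M.act F).map a, (M.act F).map b, I.act_mem F hgI, ?_⟩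
      show (M.act F).map _ = _
      rw [(M.act F).map_comp, (M.act F).map_comp]
    exact h hf

theorem genIdeal_contains :
    ∀ (i : ι) (X Y : ↥(S i)), (I.ideal i).carrier X Y ≤
      ((genIdeal M S hS I).ideal i).carrier X.1 Y.1 := by
  intro i X Y f hf
  refine AddSubgroup.subset_closure (G := (M.cat i).Hom X.1 Y.1) ⟨X, Y, f, (M.cat i).id X.1, (M.cat i).id Y.1, hf, ?_⟩
  exact (((M.cat i).id_comp _).trans ((M.cat i).comp_id (X := X.1) (Y := Y.1) f)).symm

theorem genIdeal_restrict_le :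
    ∀ (i : ι) (X Y : ↥(S i)), ((genIdeal M S hS I).ideal i).carrier X.1 Y.1 ≤
      (I.ideal i).carrier X Y := by
  intro i X Y
  refine (AddSubgroup.closure_le (G := (M.cat i).Hom X.1 Y.1) (K := (I.ideal i).carrier X Y)).2 ?_
  rintro x ⟨U, V, g0, a, b, hgI, rfl⟩
  exact (I.ideal i).comp_mem_left (X := X) (Y := U) (Z := Y) a
    ((I.ideal i).comp_mem_right (X := U) (Y := V) (Z := Y) b hgI)

end Aux

/-- Let `M` be a dg 2-representation, `N = M.Sub S hS` a full
pretriangulated 2-subrepresentation, `I` a dg ideal of `N`, and `I'` the dg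
ideal of `M` generated by `I` (the smallest dg ideal of `M` whose restriction
to `N` contains `I`).  Then `I' ∩ N = I`. -/
theorem restriction_of_generated_repIdeal_eq {ι : Type} {Mor : ι → ι → Type}
    (M : TwoRep ι Mor) (S : ∀ i, Set (M.cat i).Obj) (hS : ClosedUnderAct M S)
    (I : RepIdeal (M.Sub S hS)) (I' : RepIdeal M)
    (hcontain : ∀ (i : ι) (X Y : ↥(S i)),
      (I.ideal i).carrier X Y ≤ (I'.ideal i).carrier X.1 Y.1)
    (hsmallest : ∀ J : RepIdeal M,
      (∀ (i : ι) (X Y : ↥(S i)), (I.ideal i).carrier X Y ≤ (J.ideal i).carrier X.1 Y.1) →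
      ∀ (i : ι) (X Y : (M.cat i).Obj), (I'.ideal i).carrier X Y ≤ (J.ideal i).carrier X Y) :
    ∀ (i : ι) (X Y : ↥(S i)), (I'.ideal i).carrier X.1 Y.1 = (I.ideal i).carrier X Y := by
  intro i X Y
  refine le_antisymm ?_ (hcontain i X Y)
  exact le_trans (hsmallest (genIdeal M S hS I) (genIdeal_contains M S hS I) i X.1 Y.1)
    (genIdeal_restrict_le M S hS I i X Y)
end

section
/- Let L be a strong left cell contained in a weak left cell L' of a pretriangulated dg 2-category C, let R_L^≤ denote the 2-subrepresentation of the principal 2-representation generated by L, and R_{L'}^⪯ the maximal 2-subrepresentation contained in the ideal generated by id_X for X ∈ L'. If I is a dg ideal in R_{L'}^⪯, then the dg ideal generated by I ∩ R_L^≤ inside R_{L'}^⪯ equals I. -/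
set_option linter.unusedVariables false
/-- Let `L` be a strong left cell contained in a weak left
cell `L'`.  Here `M` plays the role of `R_{L'}^⪯` and the object family `S`
that of the 2-subrepresentation `R_L^≤`; by Lemma "Rdifference" every object
`Y` of `R_{L'}^⪯` satisfies `id_Y = p ∘ id_Z ∘ ι` for some object `Z` of
`R_L^≤` (hypothesis `hfac`).  Then every dg ideal `I` of `R_{L'}^⪯` is
generated by its restriction `I ∩ R_L^≤`: any dg ideal `J` containing the
restriction of `I` to `S` contains `I` (the converse containment being
trivial, the ideal generated by `I ∩ R_L^≤` equals `I`). -/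
theorem ideal_generated_by_restriction_to_strong_cell_subrep
    {ι : Type} {Mor : ι → ι → Type}
    (M : TwoRep ι Mor) (S : ∀ i, Set (M.cat i).Obj) (hS : ClosedUnderAct M S)
    (hfac : ∀ (i : ι) (Y : (M.cat i).Obj), ∃ Z ∈ S i,
      ∃ (u : (M.cat i).Hom Y Z) (p : (M.cat i).Hom Z Y),
        (M.cat i).comp u p = (M.cat i).id Y)
    (I J : RepIdeal M)
    (hJ : ∀ (i : ι) (X Y : (M.cat i).Obj), X ∈ S i → Y ∈ S i →
      (I.ideal i).carrier X Y ≤ (J.ideal i).carrier X Y) :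
    I.le J := by
  intro i X Y f hf
  obtain ⟨Z, hZ, u, p, hup⟩ := hfac i X
  obtain ⟨Z', hZ', u', p', hup'⟩ := hfac i Y
  have hmid : (M.cat i).comp p ((M.cat i).comp f u') ∈ (I.ideal i).carrier Z Z' :=
    (I.ideal i).comp_mem_left p ((I.ideal i).comp_mem_right u' hf)
  have hJmid := hJ i Z Z' hZ hZ' hmid
  have h2 : (M.cat i).comp u ((M.cat i).comp ((M.cat i).comp p ((M.cat i).comp f u')) p')
      ∈ (J.ideal i).carrier X Y :=
    (J.ideal i).comp_mem_left u ((J.ideal i).comp_mem_right p' hJmid)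
  have : (M.cat i).comp u ((M.cat i).comp ((M.cat i).comp p ((M.cat i).comp f u')) p') = f := by
    rw [(M.cat i).assoc, (M.cat i).assoc, hup', (M.cat i).comp_id, ← (M.cat i).assoc, hup,
      (M.cat i).id_comp]
  rwa [this] at h2
end
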